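/- The four TRIP maps given by the matrix pairs (A₀,A₁), (A₀,B₁), (B₀,A₁) and (B₀,B₁) — where A₀ has rows (0,1,0),(1,0,0),(0,1,1), B₀ has rows (0,1,0),(0,0,1),(1,1,0), A₁ has rows (1,1,0),(0,0,1),(0,1,0) and B₁ has rows (0,1,1),(1,0,0),(0,1,0) (these are the triples (e,23,23), (e,23,132), (e,132,23), (e,132,132)) — all give the same partition of the triangle: for every n ≥ 1, the family of subtriangles {convex hull of the π-images of the columns of V·C_{i₁}⋯C_{iₙ} : (i₁,…,iₙ) ∈ {0,1}ⁿ}, where C_{i} denotes the relevant 0-matrix or 1-matrix of the pair, is the same set of subsets of ℝ² for all four pairs. -/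

import Mathlib

/-!
Let `P` be the permutation matrix of the transposition `(0 2)`. Then `P A₀ = A₁ P`, `P A₁ = A₀ P`,
`B₀ = A₀ P` and `B₁ = A₁ P`. So in a product of letters of one pair, each `P` can be pushed to the
right end, relabelling the letters it passes; every such product is therefore a product of letters
of any other pair followed by `1` or `P`. Right multiplication by a permutation matrix only
permutes the columns, i.e. the vertices of the subtriangle.
-/

open Matrix MeasureTheory Filter

noncomputable section

/-- Projection π(a,b,c) = (b/a, c/a). -/
def projPt (v : Fin 3 → ℝ) : ℝ × ℝ := (v 1 / v 0, v 2 / v 0)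

def Vmat : Matrix (Fin 3) (Fin 3) ℝ := !![1,1,1; 0,1,1; 0,0,1]

def prodSeq (C : Fin 2 → Matrix (Fin 3) (Fin 3) ℝ) (i : ℕ → Fin 2) :
    ℕ → Matrix (Fin 3) (Fin 3) ℝ
  | 0 => 1
  | n + 1 => prodSeq C i n * C (i (n + 1))

/-- The subtriangle: convex hull of the π-images of the columns of V·C_{i₁}⋯C_{iₙ}. -/
def subTri (C : Fin 2 → Matrix (Fin 3) (Fin 3) ℝ) (i : ℕ → Fin 2) (n : ℕ) :
    Set (ℝ × ℝ) :=
  convexHull ℝ (Set.range fun j : Fin 3 => projPt fun k => (Vmat * prodSeq C i n) k j)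

/-- The level-n partition of the triangle determined by a pair of matrices. -/
def partitionAt (C : Fin 2 → Matrix (Fin 3) (Fin 3) ℝ) (n : ℕ) : Set (Set (ℝ × ℝ)) :=
  {T : Set (ℝ × ℝ) | ∃ i : ℕ → Fin 2, T = subTri C i n}

/-- The 0-matrix of (e,23,23) and (e,23,132). -/
def A0 : Matrix (Fin 3) (Fin 3) ℝ := !![0,1,0; 1,0,0; 0,1,1]
/-- The 0-matrix of (e,132,23) and (e,132,132). -/
def B0 : Matrix (Fin 3) (Fin 3) ℝ := !![0,1,0; 0,0,1; 1,1,0]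
/-- The 1-matrix of (e,23,23) and (e,132,23). -/
def A1 : Matrix (Fin 3) (Fin 3) ℝ := !![1,1,0; 0,0,1; 0,1,0]
/-- The 1-matrix of (e,23,132) and (e,132,132). -/
def B1 : Matrix (Fin 3) (Fin 3) ℝ := !![0,1,1; 1,0,0; 0,1,0]

open Equiv

theorem range_col_mul_permMatrix {α : Type*} (f : (Fin 3 → ℝ) → α) (N : Matrix (Fin 3) (Fin 3) ℝ)
    (σ : Perm (Fin 3)) :
    (Set.range fun j => f fun k => (N * σ.permMatrix ℝ) k j) =
      Set.range fun j => f fun k => N k j := by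
  rw [PEquiv.mul_toMatrix_toPEquiv]
  exact σ.symm.surjective.range_comp fun j => f fun k => N k j

theorem subTri_eq_of_prodSeq_eq_mul_permMatrix {C D : Fin 2 → Matrix (Fin 3) (Fin 3) ℝ}
    {i j : ℕ → Fin 2} {n : ℕ} {σ : Perm (Fin 3)}
    (h : prodSeq C i n = prodSeq D j n * σ.permMatrix ℝ) : subTri C i n = subTri D j n := by
  rw [subTri, subTri, h, ← mul_assoc, range_col_mul_permMatrix]

theorem prodSeq_update_of_lt (C : Fin 2 → Matrix (Fin 3) (Fin 3) ℝ) (i : ℕ → Fin 2) (b : Fin 2)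
    {k : ℕ} : ∀ {n : ℕ}, n < k → prodSeq C (Function.update i k b) n = prodSeq C i n
  | 0, _ => rfl
  | n + 1, h => by
    rw [prodSeq, prodSeq, prodSeq_update_of_lt C i b (by omega), Function.update_of_ne (by omega)]

/-- A permutation matrix from `G` can be pushed rightwards past a letter of `C`, turning it into
a letter of `D`. -/
def Intertwines (G : Subgroup (Perm (Fin 3))) (C D : Fin 2 → Matrix (Fin 3) (Fin 3) ℝ) : Prop :=
  ∀ σ ∈ G, ∀ b, ∃ b', ∃ τ ∈ G, σ.permMatrix ℝ * C b = D b' * τ.permMatrix ℝ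

namespace Intertwines

variable {G : Subgroup (Perm (Fin 3))} {C D : Fin 2 → Matrix (Fin 3) (Fin 3) ℝ}

theorem exists_prodSeq_eq (h : Intertwines G C D) (i : ℕ → Fin 2) :
    ∀ n, ∃ j, ∃ σ ∈ G, prodSeq C i n = prodSeq D j n * σ.permMatrix ℝ
  | 0 => ⟨i, 1, G.one_mem, by simp [prodSeq]⟩
  | n + 1 => by
    obtain ⟨j, σ, hσ, hprod⟩ := h.exists_prodSeq_eq i n
    obtain ⟨b', τ, hτ, hswap⟩ := h σ hσ (i (n + 1))
    refine ⟨Function.update j (n + 1) b', τ, hτ, ?_⟩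
    rw [prodSeq, prodSeq, prodSeq_update_of_lt D j b' n.lt_succ_self, Function.update_self,
      hprod, mul_assoc, hswap, mul_assoc]

theorem partitionAt_subset (h : Intertwines G C D) (n : ℕ) :
    partitionAt C n ⊆ partitionAt D n := by
  rintro T ⟨i, rfl⟩
  obtain ⟨j, σ, -, hprod⟩ := h.exists_prodSeq_eq i n
  exact ⟨j, subTri_eq_of_prodSeq_eq_mul_permMatrix hprod⟩

end Intertwines

section Twist

variable {G : Subgroup (Perm (Fin 3))} {A D : Fin 2 → Matrix (Fin 3) (Fin 3) ℝ}

theorem Intertwines.self_twisted (hA : Intertwines G A A)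
    (hD : ∀ b, ∃ ρ ∈ G, D b = A b * ρ.permMatrix ℝ) : Intertwines G A D := by
  intro σ hσ b
  obtain ⟨b', τ, hτ, hswap⟩ := hA σ hσ b
  obtain ⟨ρ, hρ, hD⟩ := hD b'
  have hA' : A b' = D b' * ρ⁻¹.permMatrix ℝ := by
    rw [hD, mul_assoc, ← Matrix.permMatrix_mul, inv_mul_cancel, Matrix.permMatrix_one, mul_one]
  refine ⟨b', τ * ρ⁻¹, G.mul_mem hτ (G.inv_mem hρ), ?_⟩
  rw [hswap, hA', mul_assoc, Matrix.permMatrix_mul]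

theorem Intertwines.twisted_self (hA : Intertwines G A A)
    (hD : ∀ b, ∃ ρ ∈ G, D b = A b * ρ.permMatrix ℝ) : Intertwines G D A := by
  intro σ hσ b
  obtain ⟨ρ, hρ, hD⟩ := hD b
  obtain ⟨b', τ, hτ, hswap⟩ := hA σ hσ b
  refine ⟨b', ρ * τ, G.mul_mem hρ hτ, ?_⟩
  rw [hD, ← mul_assoc, hswap, mul_assoc, Matrix.permMatrix_mul]

theorem partitionAt_eq_of_eq_mul_permMatrix (hA : Intertwines G A A)
    (hD : ∀ b, ∃ ρ ∈ G, D b = A b * ρ.permMatrix ℝ) (n : ℕ) :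
    partitionAt A n = partitionAt D n :=
  ((hA.self_twisted hD).partitionAt_subset n).antisymm
    ((hA.twisted_self hD).partitionAt_subset n)

end Twist

theorem swap_permMatrix_mul_A0 :
    (swap 0 2 : Perm (Fin 3)).permMatrix ℝ * A0 = A1 * (swap 0 2 : Perm (Fin 3)).permMatrix ℝ := by
  rw [PEquiv.toMatrix_toPEquiv_mul, PEquiv.mul_toMatrix_toPEquiv]
  ext i j
  fin_cases i <;> fin_cases j <;> simp [A0, A1, swap_apply_def]

theorem swap_permMatrix_mul_A1 :
    (swap 0 2 : Perm (Fin 3)).permMatrix ℝ * A1 = A0 * (swap 0 2 : Perm (Fin 3)).permMatrix ℝ := by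
  rw [PEquiv.toMatrix_toPEquiv_mul, PEquiv.mul_toMatrix_toPEquiv]
  ext i j
  fin_cases i <;> fin_cases j <;> simp [A0, A1, swap_apply_def]

theorem B0_eq_A0_mul_swap : B0 = A0 * (swap 0 2 : Perm (Fin 3)).permMatrix ℝ := by
  rw [PEquiv.mul_toMatrix_toPEquiv]
  ext i j
  fin_cases i <;> fin_cases j <;> simp [A0, B0, swap_apply_def]

theorem B1_eq_A1_mul_swap : B1 = A1 * (swap 0 2 : Perm (Fin 3)).permMatrix ℝ := by
  rw [PEquiv.mul_toMatrix_toPEquiv]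
  ext i j
  fin_cases i <;> fin_cases j <;> simp [A1, B1, swap_apply_def]

/-- The group `{1, (0 2)}`, written as a stabilizer so that membership is decidable. -/
def middleStabilizer : Subgroup (Perm (Fin 3)) := MulAction.stabilizer (Perm (Fin 3)) (1 : Fin 3)

theorem mem_middleStabilizer (σ : Perm (Fin 3)) :
    σ ∈ middleStabilizer ↔ σ = 1 ∨ σ = swap 0 2 := by
  rw [middleStabilizer, MulAction.mem_stabilizer_iff, Perm.smul_def]
  revert σ
  decide

theorem intertwines_A0_A1 : Intertwines middleStabilizer ![A0, A1] ![A0, A1] := by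
  intro σ hσ b
  rcases (mem_middleStabilizer σ).1 hσ with rfl | rfl
  · exact ⟨b, 1, middleStabilizer.one_mem, by simp⟩
  · refine ⟨b + 1, swap 0 2, hσ, ?_⟩
    fin_cases b
    · exact swap_permMatrix_mul_A0
    · exact swap_permMatrix_mul_A1

theorem stmt18 : ∀ n : ℕ, 1 ≤ n →
    partitionAt ![A0, A1] n = partitionAt ![A0, B1] n ∧
    partitionAt ![A0, A1] n = partitionAt ![B0, A1] n ∧
    partitionAt ![A0, A1] n = partitionAt ![B0, B1] n := by
  intro n _
  have keep (M : Matrix (Fin 3) (Fin 3) ℝ) : ∃ ρ ∈ middleStabilizer, M = M * ρ.permMatrix ℝ :=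
    ⟨1, middleStabilizer.one_mem, by simp⟩
  have hP : swap 0 2 ∈ middleStabilizer := (mem_middleStabilizer _).2 (Or.inr rfl)
  have twist0 : ∃ ρ ∈ middleStabilizer, B0 = A0 * ρ.permMatrix ℝ := ⟨_, hP, B0_eq_A0_mul_swap⟩
  have twist1 : ∃ ρ ∈ middleStabilizer, B1 = A1 * ρ.permMatrix ℝ := ⟨_, hP, B1_eq_A1_mul_swap⟩
  exact ⟨partitionAt_eq_of_eq_mul_permMatrix intertwines_A0_A1
      (Fin.forall_fin_two.2 ⟨keep A0, twist1⟩) n,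
    partitionAt_eq_of_eq_mul_permMatrix intertwines_A0_A1
      (Fin.forall_fin_two.2 ⟨twist0, keep A1⟩) n,
    partitionAt_eq_of_eq_mul_permMatrix intertwines_A0_A1
      (Fin.forall_fin_two.2 ⟨twist0, twist1⟩) n⟩
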